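/- arXiv:math/0610979 — 4 statements merged into one kernel-verified Lean document; each statement's English description precedes it below -/
import Mathlib

section
/- Let E be a real inner product space and let p > 1 be a real number. Define the map A : E → E by A(x) = ‖x‖^(p−2) · x for x ≠ 0 and A(0) = 0. Then for any two distinct vectors a, b ∈ E one has the strict monotonicity inequality ⟨A(a) − A(b), a − b⟩ > 0. -/
/-!
Write `A x = s • x` with `s = ‖x‖ ^ (p - 2)`. Expanding, `⟪A a - A b, a - b⟫` splits as
`(‖a‖ ^ (p - 1) - ‖b‖ ^ (p - 1)) * (‖a‖ - ‖b‖)`, positive when `‖a‖ ≠ ‖b‖` because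
`r ↦ r ^ (p - 1)` is strictly increasing, plus `(s_a + s_b) * (‖a‖ * ‖b‖ - ⟪a, b⟫)`, nonnegative by
Cauchy–Schwarz. When `‖a‖ = ‖b‖` the expression is simply `‖a‖ ^ (p - 2) * ‖a - b‖ ^ 2 > 0`.
-/

open RealInnerProductSpace

lemma StrictMonoOn.sub_mul_sub_pos {α : Type*} [Field α] [LinearOrder α] [IsStrictOrderedRing α]
    {f : α → α} {s : Set α} (hf : StrictMonoOn f s) {x y : α} (hx : x ∈ s) (hy : y ∈ s)
    (hxy : x ≠ y) : 0 < (f x - f y) * (x - y) := by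
  rcases hxy.lt_or_gt with h | h
  · exact mul_pos_of_neg_of_neg (sub_neg.2 (hf hx hy h)) (sub_neg.2 h)
  · exact mul_pos (sub_pos.2 (hf hy hx h)) (sub_pos.2 h)

lemma Real.rpow_sub_two_mul_self {p r : ℝ} (hp : p ≠ 1) (hr : 0 ≤ r) :
    r ^ (p - 2) * r = r ^ (p - 1) := by
  rw [← Real.rpow_add_one' hr (by contrapose! hp; linarith)]
  ring_nf

section InnerProduct

variable {E : Type*} [SeminormedAddCommGroup E] [InnerProductSpace ℝ E]

lemma inner_smul_sub_smul_sub_sub (s t : ℝ) (a b : E) :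
    ⟪s • a - t • b, a - b⟫ =
      (s * ‖a‖ - t * ‖b‖) * (‖a‖ - ‖b‖) + (s + t) * (‖a‖ * ‖b‖ - ⟪a, b⟫) := by
  simp only [inner_sub_left, inner_sub_right, real_inner_smul_left, real_inner_self_eq_norm_sq,
    real_inner_comm a b]
  ring

lemma inner_smul_sub_smul_sub_sub_self (s : ℝ) (a b : E) :
    ⟪s • a - s • b, a - b⟫ = s * ‖a - b‖ ^ 2 := by
  rw [← smul_sub, real_inner_smul_left, real_inner_self_eq_norm_sq]

end InnerProduct

/-- Vanishes at `0` whatever the junk value of `0 ^ (p - 2)`. -/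
noncomputable def pLaplacianFlux {E : Type*} [SeminormedAddCommGroup E] [NormedSpace ℝ E]
    (p : ℝ) (x : E) : E :=
  ‖x‖ ^ (p - 2) • x

lemma inner_pLaplacianFlux_sub_pos {E : Type*} [NormedAddCommGroup E] [InnerProductSpace ℝ E]
    {p : ℝ} (hp : 1 < p) {a b : E} (hab : a ≠ b) :
    0 < ⟪pLaplacianFlux p a - pLaplacianFlux p b, a - b⟫ := by
  unfold pLaplacianFlux
  rcases eq_or_ne ‖a‖ ‖b‖ with hnorm | hnorm
  · have ha : a ≠ 0 := by
      rintro rfl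
      exact hab (norm_eq_zero.1 (by rw [← hnorm, norm_zero])).symm
    rw [hnorm, inner_smul_sub_smul_sub_sub_self, ← hnorm]
    have := norm_pos_iff.2 ha
    have := norm_pos_iff.2 (sub_ne_zero.2 hab)
    positivity
  · rw [inner_smul_sub_smul_sub_sub, Real.rpow_sub_two_mul_self hp.ne' (norm_nonneg a),
      Real.rpow_sub_two_mul_self hp.ne' (norm_nonneg b)]
    refine add_pos_of_pos_of_nonneg ?_ (mul_nonneg (by positivity) ?_)
    · exact (Real.strictMonoOn_rpow_Ici_of_exponent_pos (sub_pos.2 hp)).sub_mul_sub_pos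
        (norm_nonneg a) (norm_nonneg b) hnorm
    · exact sub_nonneg.2 (real_inner_le_norm a b)

/-- Strict monotonicity of the `p`-Laplacian flux map `A x = ‖x‖^(p-2) • x`
(with the convention `A 0 = 0`) on a real inner product space, for `p > 1`:
for any two distinct vectors `a ≠ b` one has `⟪A a - A b, a - b⟫ > 0`. -/
theorem pLaplacian_flux_strict_mono
    {E : Type*} [NormedAddCommGroup E] [InnerProductSpace ℝ E]
    (p : ℝ) (hp : 1 < p)
    (A : E → E) (hA0 : A 0 = 0)
    (hA : ∀ x : E, x ≠ 0 → A x = (‖x‖ ^ (p - 2) : ℝ) • x)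
    (a b : E) (hab : a ≠ b) :
    0 < ⟪A a - A b, a - b⟫ := by
  have hA_eq : ∀ x, A x = pLaplacianFlux p x := by
    intro x
    rcases eq_or_ne x 0 with rfl | hx
    · simp [pLaplacianFlux, hA0]
    · exact hA x hx
  simpa only [hA_eq] using inner_pLaplacianFlux_sub_pos hp hab
end

section
/- Let (α, μ) be a measure space, E a real inner product space, and p ≥ 2 a real number. Let u, v : α → E be strongly measurable maps such that the real-valued function x ↦ ⟨‖v(x)‖^(p−2) v(x) − ‖u(x)‖^(p−2) u(x), v(x) − u(x)⟩ is integrable with ∫_α ⟨‖v(x)‖^(p−2) v(x) − ‖u(x)‖^(p−2) u(x), v(x) − u(x)⟩ dμ(x) ≤ 0. Then u(x) = v(x) for μ-almost every x ∈ α. -/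
open MeasureTheory RealInnerProductSpace

lemma pLap_expand {E : Type*} [NormedAddCommGroup E] [InnerProductSpace ℝ E]
    (p : ℝ) (hp : 2 ≤ p) (a b : E) :
    ⟪(‖b‖ ^ (p - 2) : ℝ) • b - (‖a‖ ^ (p - 2) : ℝ) • a, b - a⟫ =
      (‖b‖ ^ (p-1) - ‖a‖ ^ (p-1)) * (‖b‖ - ‖a‖)
        + (‖b‖ ^ (p-2) + ‖a‖ ^ (p-2)) * (‖a‖ * ‖b‖ - ⟪a, b⟫) := by
  have h : ∀ x : E, (‖x‖ : ℝ) ^ (p-2) * ‖x‖ = ‖x‖ ^ (p-1) := by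
    intro x
    rcases eq_or_ne ‖x‖ 0 with h0 | h0
    · rw [h0, mul_zero, Real.zero_rpow (by linarith)]
    · rw [← Real.rpow_add_one h0]; ring_nf
  have hb := h b
  have ha := h a
  have hbb : ⟪b, b⟫ = ‖b‖ * ‖b‖ := real_inner_self_eq_norm_mul_norm b
  have haa : ⟪a, a⟫ = ‖a‖ * ‖a‖ := real_inner_self_eq_norm_mul_norm a
  have hab : ⟪b, a⟫ = ⟪a, b⟫ := real_inner_comm a b
  simp only [inner_sub_left, inner_sub_right, real_inner_smul_left, hbb, haa, hab]
  linear_combination (‖b‖ - ‖a‖) * hb - (‖b‖ - ‖a‖) * ha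

lemma pLap_nonneg {E : Type*} [NormedAddCommGroup E] [InnerProductSpace ℝ E]
    (p : ℝ) (hp : 2 ≤ p) (a b : E) :
    0 ≤ ⟪(‖b‖ ^ (p - 2) : ℝ) • b - (‖a‖ ^ (p - 2) : ℝ) • a, b - a⟫ := by
  rw [pLap_expand p hp a b]
  have hcs : ⟪a, b⟫ ≤ ‖a‖ * ‖b‖ := real_inner_le_norm a b
  have h1 : 0 ≤ (‖b‖ ^ (p-1) - ‖a‖ ^ (p-1)) * (‖b‖ - ‖a‖) := by
    rcases le_total ‖a‖ ‖b‖ with h | h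
    · exact mul_nonneg (by simpa using sub_nonneg.2 (Real.rpow_le_rpow (norm_nonneg a) h (by linarith))) (sub_nonneg.2 h)
    · nlinarith [sub_nonpos.2 (Real.rpow_le_rpow (norm_nonneg b) h (by linarith : (0:ℝ) ≤ p-1)), sub_nonpos.2 h]
  have h2 : (0:ℝ) ≤ ‖b‖ ^ (p-2) + ‖a‖ ^ (p-2) :=
    add_nonneg (Real.rpow_nonneg (norm_nonneg b) _) (Real.rpow_nonneg (norm_nonneg a) _)
  nlinarith

lemma pLap_pos {E : Type*} [NormedAddCommGroup E] [InnerProductSpace ℝ E]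
    (p : ℝ) (hp : 2 ≤ p) (a b : E) (hab : a ≠ b) :
    0 < ⟪(‖b‖ ^ (p - 2) : ℝ) • b - (‖a‖ ^ (p - 2) : ℝ) • a, b - a⟫ := by
  rw [pLap_expand p hp a b]
  have hcs : ⟪a, b⟫ ≤ ‖a‖ * ‖b‖ := real_inner_le_norm a b
  have h2 : (0:ℝ) ≤ ‖b‖ ^ (p-2) + ‖a‖ ^ (p-2) :=
    add_nonneg (Real.rpow_nonneg (norm_nonneg b) _) (Real.rpow_nonneg (norm_nonneg a) _)
  rcases eq_or_ne ‖a‖ ‖b‖ with he | he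
  · -- equal norms, a ≠ b
    have hr : 0 < ‖a‖ := by
      rcases (norm_nonneg a).lt_or_eq with h | h
      · exact h
      · exfalso
        apply hab
        have ha0 : a = 0 := norm_eq_zero.1 h.symm
        have hb0 : b = 0 := norm_eq_zero.1 (he ▸ h.symm)
        rw [ha0, hb0]
    have hcs' : ⟪a, b⟫ < ‖a‖ * ‖b‖ := by
      rcases hcs.lt_or_eq with h | h
      · exact h
      · exfalso
        apply hab
        have := (inner_eq_norm_mul_iff_real (x := a) (y := b)).1 h
        -- ‖b‖ • a = ‖a‖ • b
        rw [← he] at this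
        exact smul_right_injective E (ne_of_gt hr) this
    have h2' : (0:ℝ) < ‖b‖ ^ (p-2) + ‖a‖ ^ (p-2) := by
      have : (0:ℝ) < ‖a‖ ^ (p-2) := Real.rpow_pos_of_pos hr _
      linarith [Real.rpow_nonneg (norm_nonneg b) (p-2)]
    have h1 : (‖b‖ ^ (p-1) - ‖a‖ ^ (p-1)) * (‖b‖ - ‖a‖) = 0 := by rw [he]; ring
    nlinarith
  · have h1 : 0 < (‖b‖ ^ (p-1) - ‖a‖ ^ (p-1)) * (‖b‖ - ‖a‖) := by
      rcases he.lt_or_gt with h | h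
      · exact mul_pos (sub_pos.2 (Real.rpow_lt_rpow (norm_nonneg a) h (by linarith))) (sub_pos.2 h)
      · exact mul_pos_of_neg_of_neg (sub_neg.2 (Real.rpow_lt_rpow (norm_nonneg b) h (by linarith))) (sub_neg.2 h)
    nlinarith

/-- Measure-theoretic core of the comparison principle for the `p`-Laplacian,
`p ≥ 2`: if the integral of `⟪‖v‖^(p-2) v - ‖u‖^(p-2) u, v - u⟫` is nonpositive,
then `u = v` almost everywhere. -/
theorem ae_eq_of_integral_pLaplacian_pairing_nonpos
    {α : Type*} [MeasurableSpace α] (μ : Measure α)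
    {E : Type*} [NormedAddCommGroup E] [InnerProductSpace ℝ E]
    (p : ℝ) (hp : 2 ≤ p)
    (u v : α → E) (hu : StronglyMeasurable u) (hv : StronglyMeasurable v)
    (hint : Integrable
      (fun x => ⟪(‖v x‖ ^ (p - 2) : ℝ) • v x - (‖u x‖ ^ (p - 2) : ℝ) • u x, v x - u x⟫) μ)
    (hle : ∫ x, ⟪(‖v x‖ ^ (p - 2) : ℝ) • v x - (‖u x‖ ^ (p - 2) : ℝ) • u x, v x - u x⟫ ∂μ ≤ 0) :
    u =ᵐ[μ] v := by
  set f : α → ℝ :=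
    fun x => ⟪(‖v x‖ ^ (p - 2) : ℝ) • v x - (‖u x‖ ^ (p - 2) : ℝ) • u x, v x - u x⟫ with hf
  have hnn : 0 ≤ᵐ[μ] f := Filter.Eventually.of_forall fun x => pLap_nonneg p hp (u x) (v x)
  have hz : ∫ x, f x ∂μ = 0 := le_antisymm hle (integral_nonneg fun x => pLap_nonneg p hp (u x) (v x))
  have hfz : f =ᵐ[μ] 0 := (integral_eq_zero_iff_of_nonneg_ae hnn hint).1 hz
  filter_upwards [hfz] with x hx
  by_contra h
  exact absurd hx (ne_of_gt (pLap_pos p hp (u x) (v x) h))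
end

section
/- Let ρ < R be real numbers and p > 1. Let w : ℝ → ℝ be continuously differentiable with w(r) > 0 for all r ∈ [ρ, R], and let g, M : ℝ → ℝ be continuous on [ρ, R] with g(r) > 0 for all r ∈ [ρ, R]. Define Λ(r) = w(r) · exp(−∫_ρ^r M(t)/((p−1) g(t)²) dt) and ψ(r) = (∫_ρ^r Λ(t) dt) / (∫_ρ^R Λ(t) dt) for r ∈ [ρ, R]. If moreover M(r) ≥ 0 for all r ∈ [ρ, R] (the balance condition), then ψ''(r) − ψ'(r) · w'(r)/w(r) ≤ 0 for every r ∈ [ρ, R]. -/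
open MeasureTheory intervalIntegral

/-- The function `Λ(r) = w(r) · exp(−∫_ρ^r M(t)/((p−1) g(t)²) dt)`. -/
noncomputable def Lam (p : ℝ) (w g M : ℝ → ℝ) (ρ r : ℝ) : ℝ :=
  w r * Real.exp (-(∫ t in ρ..r, M t / ((p - 1) * g t ^ 2)))

/-- The function `ψ(r) = (∫_ρ^r Λ(t) dt) / (∫_ρ^R Λ(t) dt)`. -/
noncomputable def psiSol (p : ℝ) (w g M : ℝ → ℝ) (ρ R r : ℝ) : ℝ :=
  (∫ t in ρ..r, Lam p w g M ρ t) / (∫ t in ρ..R, Lam p w g M ρ t)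

/-!
Writing `h = M / ((p - 1) g²)`, we have `Λ = w · exp (-∫ h)`, so `Λ' = w' e - Λ h` with
`e = exp (-∫ h)`, and `ψ' = Λ / C` with `C = ∫_ρ^R Λ`. Hence
`ψ'' - ψ' w'/w = (w' e - Λ h)/C - (w e / C) w'/w = -Λ h / C`, which is `≤ 0` because
`Λ > 0`, `C ≥ 0` and, by the balance condition, `h ≥ 0`. Within-derivatives on a
nondegenerate interval are unique, so the given `ψ'` and `ψ''` are these.
-/

theorem hasDerivWithinAt_integral_Icc {f : ℝ → ℝ} {a b r : ℝ}
    (hf : ContinuousOn f (Set.Icc a b)) (hr : r ∈ Set.Icc a b) :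
    HasDerivWithinAt (fun u => ∫ x in a..u, f x) (f r) (Set.Icc a b) r := by
  have : Fact (r ∈ Set.Icc a b) := ⟨hr⟩
  have hint : IntervalIntegrable f volume a r :=
    (hf.mono (Set.uIcc_of_le hr.1 ▸ Set.Icc_subset_Icc_right hr.2)).intervalIntegrable
  exact integral_hasDerivWithinAt_right hint
    (hf.stronglyMeasurableAtFilter_nhdsWithin measurableSet_Icc r) (hf r hr)

section Lam

variable {p ρ R r : ℝ} {w w' g M : ℝ → ℝ}

theorem continuousOn_balance_integrand (hp : p ≠ 1) (hgc : ContinuousOn g (Set.Icc ρ R))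
    (hMc : ContinuousOn M (Set.Icc ρ R)) (hg : ∀ r ∈ Set.Icc ρ R, g r ≠ 0) :
    ContinuousOn (fun t => M t / ((p - 1) * g t ^ 2)) (Set.Icc ρ R) :=
  hMc.div (continuousOn_const.mul (hgc.pow 2)) fun t ht =>
    mul_ne_zero (sub_ne_zero.mpr hp) (pow_ne_zero 2 (hg t ht))

theorem hasDerivWithinAt_Lam
    (hh : ContinuousOn (fun t => M t / ((p - 1) * g t ^ 2)) (Set.Icc ρ R))
    (hw : HasDerivWithinAt w (w' r) (Set.Icc ρ R) r) (hr : r ∈ Set.Icc ρ R) :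
    HasDerivWithinAt (Lam p w g M ρ)
      (w' r * Real.exp (-(∫ t in ρ..r, M t / ((p - 1) * g t ^ 2)))
        - Lam p w g M ρ r * (M r / ((p - 1) * g r ^ 2))) (Set.Icc ρ R) r := by
  have hexp := (hasDerivWithinAt_integral_Icc hh hr).neg.exp
  exact (hw.mul hexp).congr_deriv (by simp only [Lam, Pi.neg_apply]; ring)

theorem Lam_mul_div_self (hw : w r ≠ 0) :
    Lam p w g M ρ r * (w' r / w r)
      = w' r * Real.exp (-(∫ t in ρ..r, M t / ((p - 1) * g t ^ 2))) := by
  rw [Lam]; field_simp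

theorem hasDerivWithinAt_psiSol (hΛc : ContinuousOn (Lam p w g M ρ) (Set.Icc ρ R))
    (hr : r ∈ Set.Icc ρ R) :
    HasDerivWithinAt (psiSol p w g M ρ R)
      (Lam p w g M ρ r / ∫ t in ρ..R, Lam p w g M ρ t) (Set.Icc ρ R) r :=
  (hasDerivWithinAt_integral_Icc hΛc hr).div_const _

end Lam

theorem psiSol_concavity_of_balance_general
    (ρ R p : ℝ) (hρR : ρ < R) (hp : 1 < p)
    (w w' g M : ℝ → ℝ)
    (hw : ∀ r, HasDerivAt w (w' r) r)
    (hwpos : ∀ r ∈ Set.Icc ρ R, 0 < w r)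
    (hgc : ContinuousOn g (Set.Icc ρ R)) (hMc : ContinuousOn M (Set.Icc ρ R))
    (hgpos : ∀ r ∈ Set.Icc ρ R, 0 < g r)
    (hMnonneg : ∀ r ∈ Set.Icc ρ R, 0 ≤ M r) :
    ∀ ψ' ψ'' : ℝ → ℝ,
      (∀ r ∈ Set.Icc ρ R,
        HasDerivWithinAt (psiSol p w g M ρ R) (ψ' r) (Set.Icc ρ R) r) →
      (∀ r ∈ Set.Icc ρ R, HasDerivWithinAt ψ' (ψ'' r) (Set.Icc ρ R) r) →
      ∀ r ∈ Set.Icc ρ R, ψ'' r - ψ' r * (w' r / w r) ≤ 0 := by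
  intro ψ' ψ'' hψ' hψ'' r hr
  set s := Set.Icc ρ R
  set Λ := Lam p w g M ρ
  set C := ∫ t in ρ..R, Λ t
  have hh := continuousOn_balance_integrand hp.ne' hgc hMc fun t ht => (hgpos t ht).ne'
  have hΛ' := fun x hx => hasDerivWithinAt_Lam hh (hw x).hasDerivWithinAt hx
  have hΛc : ContinuousOn Λ s := fun x hx => (hΛ' x hx).continuousWithinAt
  have hψ'_eq : ∀ x ∈ s, ψ' x = Λ x / C := fun x hx =>
    (uniqueDiffOn_Icc hρR x hx).eq_deriv s (hψ' x hx) (hasDerivWithinAt_psiSol hΛc hx)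
  have hψ''_eq := (uniqueDiffOn_Icc hρR r hr).eq_deriv s
    ((hψ'' r hr).congr (fun x hx => (hψ'_eq x hx).symm) (hψ'_eq r hr).symm)
    ((hΛ' r hr).div_const C)
  have hΛpos : ∀ t ∈ s, 0 < Λ t := fun t ht => mul_pos (hwpos t ht) (Real.exp_pos _)
  have hC : 0 ≤ C := integral_nonneg hρR.le fun t ht => (hΛpos t ht).le
  have hrate : 0 ≤ M r / ((p - 1) * g r ^ 2) := 
    div_nonneg (hMnonneg r hr) (mul_nonneg (sub_nonneg.mpr hp.le) (sq_nonneg _))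
  rw [hψ''_eq, hψ'_eq r hr]
  calc _ = -(Λ r * (M r / ((p - 1) * g r ^ 2)) / C) := by
        rw [div_mul_eq_mul_div, Lam_mul_div_self (hwpos r hr).ne']; ring
    _ ≤ 0 := neg_nonpos.mpr (div_nonneg (mul_nonneg (hΛpos r hr).le hrate) hC)

/-- Under the balance condition `M ≥ 0`, the solution
`ψ(r) = (∫_ρ^r Λ)/(∫_ρ^R Λ)` satisfies the concavity-type inequality
`ψ''(r) − ψ'(r)·w'(r)/w(r) ≤ 0` on `[ρ, R]`. -/
theorem psiSol_concavity_of_balance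
    (ρ R p : ℝ) (hρR : ρ < R) (hp : 1 < p)
    (w w' g M : ℝ → ℝ)
    (hw : ∀ r, HasDerivAt w (w' r) r) (hw'c : Continuous w')
    (hwpos : ∀ r ∈ Set.Icc ρ R, 0 < w r)
    (hgc : ContinuousOn g (Set.Icc ρ R)) (hMc : ContinuousOn M (Set.Icc ρ R))
    (hgpos : ∀ r ∈ Set.Icc ρ R, 0 < g r)
    (hMnonneg : ∀ r ∈ Set.Icc ρ R, 0 ≤ M r) :
    ∀ ψ' ψ'' : ℝ → ℝ,
      (∀ r ∈ Set.Icc ρ R,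
        HasDerivWithinAt (psiSol p w g M ρ R) (ψ' r) (Set.Icc ρ R) r) →
      (∀ r ∈ Set.Icc ρ R, HasDerivWithinAt ψ' (ψ'' r) (Set.Icc ρ R) r) →
      ∀ r ∈ Set.Icc ρ R, ψ'' r - ψ' r * (w' r / w r) ≤ 0 :=
  psiSol_concavity_of_balance_general ρ R p hρR hp w w' g M hw hwpos hgc hMc hgpos hMnonneg
end

section
/- Let b < 0 be a real number, m ≥ 2 an integer, p ≥ 2, ρ > 0, and h₀, λ₀ real numbers satisfying m·h₀ + (p−2)·λ₀ < (m−1)·√(−b). Define η(r) = √(−b)·coth(√(−b)·r) for r > 0 and M(r) = (m+p−2)·η(r) − m·h₀ − (p−2)·λ₀. Let g : (0, ∞) → ℝ be continuous with 0 < g(r) ≤ 1 for all r > 0. Then the function Λ(r) = (sinh(√(−b)·r)/√(−b)) · exp(−∫_1^r M(t)/((p−1)·g(t)²) dt) is integrable on [ρ, ∞), i.e. ∫_ρ^∞ Λ(t) dt < ∞. -/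
open MeasureTheory

set_option maxHeartbeats 1000000

/-- Finiteness of `∫_ρ^∞ Λ` for the hyperbolic comparison constellation
(Corollary `corHadamard`): if `m·h₀ + (p−2)·λ₀ < (m−1)·√(−b)` and `0 < g ≤ 1`
is continuous on `(0,∞)`, then
`Λ(r) = (sinh(√(−b)·r)/√(−b)) · exp(−∫_1^r M(t)/((p−1)·g(t)²) dt)` is
integrable on `[ρ, ∞)`, where
`M(t) = (m+p−2)·√(−b)·coth(√(−b)·t) − m·h₀ − (p−2)·λ₀`. -/
theorem hyperbolic_Lambda_integrable
    (b : ℝ) (hb : b < 0) (m : ℕ) (hm : 2 ≤ m)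
    (p ρ h₀ lam₀ : ℝ) (hp : 2 ≤ p) (hρ : 0 < ρ)
    (hbal : (m : ℝ) * h₀ + (p - 2) * lam₀ < ((m : ℝ) - 1) * Real.sqrt (-b))
    (g : ℝ → ℝ) (hgc : ContinuousOn g (Set.Ioi 0))
    (hg : ∀ r : ℝ, 0 < r → 0 < g r ∧ g r ≤ 1) :
    IntegrableOn
      (fun r => Real.sinh (Real.sqrt (-b) * r) / Real.sqrt (-b) *
        Real.exp (-(∫ t in (1:ℝ)..r,
          (((m : ℝ) + p - 2) *
              (Real.sqrt (-b) *
                (Real.cosh (Real.sqrt (-b) * t) / Real.sinh (Real.sqrt (-b) * t))) -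
            (m : ℝ) * h₀ - (p - 2) * lam₀) / ((p - 1) * g t ^ 2))))
      (Set.Ici ρ) := by
  set s : ℝ := Real.sqrt (-b) with hs_def
  have hs : 0 < s := Real.sqrt_pos.mpr (by linarith)
  have hm2 : (2 : ℝ) ≤ (m : ℝ) := by exact_mod_cast hm
  set f : ℝ → ℝ := fun t =>
    (((m : ℝ) + p - 2) * (s * (Real.cosh (s * t) / Real.sinh (s * t))) -
      (m : ℝ) * h₀ - (p - 2) * lam₀) / ((p - 1) * g t ^ 2) with hf_def
  set Λ : ℝ → ℝ := fun r =>
    Real.sinh (s * r) / s * Real.exp (-(∫ t in (1:ℝ)..r, f t)) with hΛ_def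
  -- constants
  set c : ℝ := ((m : ℝ) + p - 2) * s - (m : ℝ) * h₀ - (p - 2) * lam₀ with hc_def
  have hc_gt : (p - 1) * s < c := by
    have : ((m : ℝ) - 1) * s + (p - 1) * s = ((m : ℝ) + p - 2) * s := by ring
    nlinarith
  set c' : ℝ := c / (p - 1) with hc'_def
  have hp1 : (0 : ℝ) < p - 1 := by linarith
  have hc'_gt : s < c' := (lt_div_iff₀ hp1).mpr (by linarith [hc_gt])
  have hc'_pos : 0 < c' := lt_trans hs hc'_gt
  -- continuity of f on (0, ∞)
  have hfc : ContinuousOn f (Set.Ioi 0) := by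
    apply ContinuousOn.div
    · apply ContinuousOn.sub
      apply ContinuousOn.sub
      · apply continuousOn_const.mul
        apply continuousOn_const.mul
        apply ContinuousOn.div
        · exact (Real.continuous_cosh.comp (continuous_const.mul continuous_id)).continuousOn
        · exact (Real.continuous_sinh.comp (continuous_const.mul continuous_id)).continuousOn
        · intro t ht
          have : 0 < s * t := mul_pos hs ht
          exact ne_of_gt (by simpa using Real.sinh_pos_iff.mpr this)
      · exact continuousOn_const
      · exact continuousOn_const
    · exact continuousOn_const.mul ((hgc.pow 2))
    · intro t ht
      have := (hg t ht).1
      positivity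
  -- lower bound on f
  have hf_lb : ∀ t : ℝ, 0 < t → c' ≤ f t := by
    intro t ht
    have hst : 0 < s * t := mul_pos hs ht
    have hsinh : 0 < Real.sinh (s * t) := Real.sinh_pos_iff.mpr hst
    have hcoth : 1 ≤ Real.cosh (s * t) / Real.sinh (s * t) := by
      rw [le_div_iff₀ hsinh, one_mul]
      nlinarith [Real.cosh_sq (s * t), Real.cosh_pos (s * t), Real.sinh_sq (s * t)]
    have hmp : (0 : ℝ) ≤ (m : ℝ) + p - 2 := by linarith
    have hnum : c ≤ ((m : ℝ) + p - 2) * (s * (Real.cosh (s * t) / Real.sinh (s * t))) -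
        (m : ℝ) * h₀ - (p - 2) * lam₀ := by
      have h1 : s * 1 ≤ s * (Real.cosh (s * t) / Real.sinh (s * t)) :=
        mul_le_mul_of_nonneg_left hcoth hs.le
      have h2 : ((m : ℝ) + p - 2) * (s * 1) ≤
          ((m : ℝ) + p - 2) * (s * (Real.cosh (s * t) / Real.sinh (s * t))) :=
        mul_le_mul_of_nonneg_left h1 hmp
      simp only [mul_one] at h2
      linarith
    have hg1 := (hg t ht).1
    have hg2 := (hg t ht).2
    have hden_pos : 0 < (p - 1) * g t ^ 2 := by positivity
    have hden_le : (p - 1) * g t ^ 2 ≤ p - 1 := by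
      have hsq : g t ^ 2 ≤ 1 := by nlinarith
      nlinarith
    have hc_pos : 0 ≤ c := by nlinarith
    calc c' = c / (p - 1) := rfl
      _ ≤ c / ((p - 1) * g t ^ 2) := by
          apply div_le_div_of_nonneg_left hc_pos hden_pos hden_le
      _ ≤ _ := (div_le_div_iff_of_pos_right hden_pos).mpr hnum
  -- f interval integrable on subintervals of (0,∞)
  have hfi : ∀ a₁ a₂ : ℝ, 0 < a₁ → 0 < a₂ →
      IntervalIntegrable f volume a₁ a₂ := by
    intro a₁ a₂ h1 h2
    apply ContinuousOn.intervalIntegrable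
    apply hfc.mono
    intro x hx
    rcases Set.mem_uIcc.mp hx with h | h
    · exact lt_of_lt_of_le h1 h.1
    · exact lt_of_lt_of_le h2 h.1
  -- continuity of the primitive, hence of Λ, on (0,∞)
  have hFc : ∀ x : ℝ, 0 < x → ContinuousAt (fun r => ∫ t in (1:ℝ)..r, f t) x := by
    intro x hx
    set b₁ : ℝ := min x 1 / 2 with hb₁
    set b₂ : ℝ := max x 1 + 1 with hb₂
    have hb₁pos : 0 < b₁ := by
      have : 0 < min x 1 := lt_min hx one_pos
      simpa [hb₁] using half_pos this
    have hb₁lt : b₁ < min x 1 := by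
      have : 0 < min x 1 := lt_min hx one_pos
      simpa [hb₁] using half_lt_self this
    have hb₂gt : max x 1 < b₂ := by simp [hb₂]
    have hmem : (1 : ℝ) ∈ Set.uIcc b₁ b₂ := by
      rw [Set.uIcc_of_le (by linarith [min_le_max (a := x) (b := 1)])]
      constructor
      · linarith [min_le_right x 1]
      · linarith [le_max_right x 1]
    have hcont := intervalIntegral.continuousOn_primitive_interval'
      (μ := volume) (f := f) (hfi b₁ b₂ hb₁pos (by linarith [le_max_left x 1, le_max_right x 1]))
      hmem
    have hxmem : x ∈ Set.Ioo b₁ b₂ :=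
      ⟨lt_of_lt_of_le hb₁lt (min_le_left x 1), lt_of_le_of_lt (le_max_left x 1) hb₂gt⟩
    have hnhds : Set.uIcc b₁ b₂ ∈ nhds x := by
      rw [Set.uIcc_of_le (by linarith [min_le_max (a := x) (b := 1)])]
      exact Icc_mem_nhds hxmem.1 hxmem.2
    exact hcont.continuousAt hnhds
  have hΛc : ContinuousOn Λ (Set.Ioi 0) := by
    intro x hx
    apply ContinuousAt.continuousWithinAt
    apply ContinuousAt.mul
    · exact ((Real.continuous_sinh.comp (continuous_const.mul continuous_id)).div_const s).continuousAt
    · exact (Real.continuous_exp.continuousAt).comp ((hFc x hx).neg)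
  -- split [ρ, ∞) = [ρ, R] ∪ [R, ∞) with R = max ρ 1
  set R : ℝ := max ρ 1 with hR
  have hR1 : (1 : ℝ) ≤ R := le_max_right ρ 1
  have hRpos : (0 : ℝ) < R := lt_of_lt_of_le one_pos hR1
  have hsplit : Set.Ici ρ ⊆ Set.Icc ρ R ∪ Set.Ici R := by
    intro x hx
    rcases le_total x R with h | h
    · exact Or.inl ⟨hx, h⟩
    · exact Or.inr h
  apply IntegrableOn.mono_set _ hsplit
  apply IntegrableOn.union
  · -- compact part
    exact (hΛc.mono (fun x hx => lt_of_lt_of_le hρ hx.1)).integrableOn_Icc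
  · -- tail: dominate by C * exp(-(c' - s) * r)
    have key : ∀ r : ℝ, R ≤ r →
        Λ r ≤ Real.exp c' / (2 * s) * Real.exp (-((c' - s) * r)) := by
      intro r hr
      have hr1 : (1 : ℝ) ≤ r := le_trans hR1 hr
      have hIineq : c' * (r - 1) ≤ ∫ t in (1:ℝ)..r, f t := by
        have h0 := intervalIntegral.integral_mono_on (μ := volume) (a := 1) (b := r) hr1
          (intervalIntegrable_const (c := c')) (hfi 1 r one_pos (by linarith))
          (fun x hx => hf_lb x (lt_of_lt_of_le one_pos hx.1))
        rw [intervalIntegral.integral_const, smul_eq_mul] at h0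
        linarith [mul_comm c' (r - 1)]
      have hsinh_le : Real.sinh (s * r) / s ≤ Real.exp (s * r) / (2 * s) := by
        have h1 : Real.sinh (s * r) ≤ Real.exp (s * r) / 2 := by
          rw [Real.sinh_eq]
          have := Real.exp_pos (-(s * r))
          linarith
        calc Real.sinh (s * r) / s ≤ Real.exp (s * r) / 2 / s :=
              (div_le_div_iff_of_pos_right hs).mpr h1
          _ = Real.exp (s * r) / (2 * s) := by rw [div_div]
      have hsinh_nonneg : 0 ≤ Real.sinh (s * r) / s := by
        have : 0 ≤ Real.sinh (s * r) :=
          le_of_lt (Real.sinh_pos_iff.mpr (mul_pos hs (by linarith)))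
        positivity
      have hexp_le : Real.exp (-(∫ t in (1:ℝ)..r, f t)) ≤ Real.exp (-(c' * (r - 1))) :=
        Real.exp_le_exp.mpr (by linarith)
      calc Λ r ≤ Real.exp (s * r) / (2 * s) * Real.exp (-(c' * (r - 1))) := by
            apply mul_le_mul hsinh_le hexp_le (Real.exp_pos _).le
            positivity
        _ = Real.exp c' / (2 * s) * Real.exp (-((c' - s) * r)) := by
            have hkey : Real.exp (s * r) * Real.exp (-(c' * (r - 1))) =
                Real.exp c' * Real.exp (-((c' - s) * r)) := by
              rw [← Real.exp_add, ← Real.exp_add]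
              congr 1
              ring
            rw [div_mul_eq_mul_div (Real.exp (s * r)) (2 * s),
              div_mul_eq_mul_div (Real.exp c') (2 * s), hkey]
    have hdom : IntegrableOn (fun r => Real.exp c' / (2 * s) * Real.exp (-((c' - s) * r)))
        (Set.Ici R) := by
      rw [integrableOn_Ici_iff_integrableOn_Ioi]
      apply Integrable.const_mul
      have h := exp_neg_integrableOn_Ioi R (sub_pos.mpr hc'_gt) (b := c' - s)
      have heq : (fun x => Real.exp (-(c' - s) * x)) = fun x => Real.exp (-((c' - s) * x)) := by
        funext x; rw [neg_mul]
      rwa [heq] at h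
    apply Integrable.mono' hdom
    · exact ((hΛc.mono (fun x hx => lt_of_lt_of_le hRpos hx)).aestronglyMeasurable
        measurableSet_Ici)
    · filter_upwards [ae_restrict_mem measurableSet_Ici] with r hr
      have hΛnn : 0 ≤ Λ r := by
        have : 0 ≤ Real.sinh (s * r) :=
          le_of_lt (Real.sinh_pos_iff.mpr (mul_pos hs (lt_of_lt_of_le hRpos hr)))
        have := Real.exp_pos (-(∫ t in (1:ℝ)..r, f t))
        simp only [hΛ_def]
        positivity
      rw [Real.norm_eq_abs, abs_of_nonneg hΛnn]
      exact key r hr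
end
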